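/- arXiv:1907.05141 — 5 statements merged into one kernel-verified Lean document; each statement's English description precedes it below -/
import Mathlib

section
/- For parameters α, λ > 0 and β ∈ (0,1), and any z in the open complex ball B = {z ∈ ℂ : |z| < λ}, the integral ∫₀^∞ (e^{izx} − 1) · α x^{−(1+β)} e^{−λx} dx equals α Γ(−β) [(λ − iz)^β − λ^β], where the power uses the principal branch of the complex logarithm. -/
/-!
For `Re u, Re v > 0`, `-1 < Re a` and `a ≠ 0`, both `∫₀^∞ t^(a-1) (e^{-ut} - e^{-vt}) dt` and
`Γ(a) (u^(-a) - v^(-a))` vanish at `u = v` and have derivative `-Γ(a+1) u^(-a-1)` in `u` on the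
right half-plane: on the left this comes from differentiating under the integral sign and the
Gamma integral with complex rate, `∫₀^∞ t^a e^{-ut} dt = Γ(a+1) u^(-a-1)`, which follows from the
real case by analytic continuation; on the right from `Γ(a+1) = a Γ(a)`. The theorem is the case
`a = -β`, `u = λ - iz`, `v = λ`, because `(e^{izx} - 1) e^{-λx} = e^{-(λ-iz)x} - e^{-λx}` and
`Re (λ - iz) ≥ λ - |z| > 0`.
-/

open MeasureTheory Set Filter Topology Complex

lemma eqOn_re_pos_of_eq_ofReal {E : Type*} [NormedAddCommGroup E] [NormedSpace ℂ E]
    [CompleteSpace E] {f g : ℂ → E} (hf : DifferentiableOn ℂ f {w | 0 < w.re})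
    (hg : DifferentiableOn ℂ g {w | 0 < w.re}) (hfg : ∀ r : ℝ, 0 < r → f r = g r) :
    EqOn f g {w | 0 < w.re} := by
  have hU : IsOpen {w : ℂ | 0 < w.re} := isOpen_lt continuous_const continuous_re
  refine (hf.analyticOnNhd hU).eqOn_of_preconnected_of_frequently_eq (hg.analyticOnNhd hU)
    (convex_halfSpace_re_gt 0).isPreconnected (z₀ := 1) (by simp) ?_
  have hreal : ∀ᶠ r : ℝ in 𝓝[≠] 1, f r = g r :=
    eventually_nhdsWithin_of_eventually_nhds ((lt_mem_nhds (one_pos : (0 : ℝ) < 1)).mono hfg)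
  have htend : Tendsto ((↑) : ℝ → ℂ) (𝓝[≠] 1) (𝓝[≠] 1) := by
    simpa using continuous_ofReal.continuousWithinAt.tendsto_nhdsWithin
      (x := (1 : ℝ)) (s := {1}ᶜ) (t := {1}ᶜ) (fun r hr ↦ by simpa using hr)
  exact htend.frequently hreal.frequently

section LaplaceGamma

variable {a u v w : ℂ}

lemma norm_cexp_neg_mul_sub_cexp_neg_mul_le {m t : ℝ} (hu : m ≤ u.re) (hv : m ≤ v.re)
    (ht : 0 ≤ t) :
    ‖cexp (-(u * t)) - cexp (-(v * t))‖ ≤ t * Real.exp (-(m * t)) * ‖u - v‖ := by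
  have hderiv : ∀ w ∈ {w : ℂ | m ≤ w.re}, HasDerivWithinAt (fun w : ℂ ↦ cexp (-(w * t)))
      (cexp (-(w * t)) * -t) {w | m ≤ w.re} w := fun w _ ↦
    ((((hasDerivAt_id w).mul_const (t : ℂ)).neg.cexp).congr_deriv (by simp)).hasDerivWithinAt
  have hbound : ∀ w ∈ {w : ℂ | m ≤ w.re},
      ‖cexp (-(w * t)) * -t‖ ≤ t * Real.exp (-(m * t)) := by
    intro w (hw : m ≤ w.re)
    rw [norm_mul, norm_neg, norm_real, Real.norm_of_nonneg ht, norm_exp, mul_comm]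
    gcongr
    simpa using mul_le_mul_of_nonneg_right hw ht
  exact (convex_halfSpace_re_ge m).norm_image_sub_le_of_norm_hasDerivWithin_le hderiv hbound hv hu

lemma norm_cpow_mul_cexp_neg_mul {t : ℝ} (ht : 0 < t) :
    ‖(t : ℂ) ^ a * cexp (-(w * t))‖ = t ^ a.re * Real.exp (-(w.re * t)) := by
  rw [norm_mul, norm_cpow_eq_rpow_re_of_pos ht, norm_exp]
  simp

lemma integrableOn_cpow_mul_cexp_neg_mul (ha : 0 < a.re) (hw : 0 < w.re) :
    IntegrableOn (fun t : ℝ ↦ (t : ℂ) ^ (a - 1) * cexp (-(w * t))) (Ioi 0) := by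
  have hreal : IntegrableOn (fun t : ℝ ↦ t ^ (a.re - 1) * Real.exp (-(w.re * t))) (Ioi 0) := by
    simpa using integrableOn_rpow_mul_exp_neg_mul_rpow (s := a.re - 1) (p := 1) (by linarith)
      one_pos hw
  refine hreal.mono' (by fun_prop) ?_
  filter_upwards [ae_restrict_mem measurableSet_Ioi] with t (ht : 0 < t)
  rw [norm_cpow_mul_cexp_neg_mul ht, sub_re, one_re]

lemma integrableOn_cpow_mul_cexp_neg_mul_sub (ha : -1 < a.re) (hu : 0 < u.re) (hv : 0 < v.re) :
    IntegrableOn (fun t : ℝ ↦ (t : ℂ) ^ (a - 1) * (cexp (-(u * t)) - cexp (-(v * t))))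
      (Ioi 0) := by
  set m := min u.re v.re
  have hdom := ((integrableOn_cpow_mul_cexp_neg_mul (a := a + 1) (w := m)
    (by rw [add_re, one_re]; linarith)
    (by rw [ofReal_re]; exact lt_min hu hv)).norm.const_mul ‖u - v‖)
  refine hdom.mono' (by fun_prop) ?_
  filter_upwards [ae_restrict_mem measurableSet_Ioi] with t (ht : 0 < t)
  calc ‖(t : ℂ) ^ (a - 1) * (cexp (-(u * t)) - cexp (-(v * t)))‖
      = t ^ (a.re - 1) * ‖cexp (-(u * t)) - cexp (-(v * t))‖ := by
        rw [norm_mul, norm_cpow_eq_rpow_re_of_pos ht]; simp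
    _ ≤ t ^ (a.re - 1) * (t * Real.exp (-(m * t)) * ‖u - v‖) := by
        gcongr
        exact norm_cexp_neg_mul_sub_cexp_neg_mul_le (min_le_left _ _) (min_le_right _ _) ht.le
    _ = ‖u - v‖ * ‖(t : ℂ) ^ (a + 1 - 1) * cexp (-(m * t))‖ := by
        rw [add_sub_cancel_right, norm_cpow_mul_cexp_neg_mul ht, Real.rpow_sub_one ht.ne']
        simp only [ofReal_re]
        field_simp

lemma hasDerivAt_integral_cpow_mul_cexp_neg_mul_sub (ha : -1 < a.re) (hu : 0 < u.re)
    (hv : 0 < v.re) :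
    HasDerivAt
      (fun u ↦ ∫ t in Ioi (0 : ℝ), (t : ℂ) ^ (a - 1) * (cexp (-(u * t)) - cexp (-(v * t))))
      (-∫ t in Ioi (0 : ℝ), (t : ℂ) ^ a * cexp (-(u * t))) u := by
  set S : Set ℂ := {w | u.re / 2 < w.re}
  have hS : S ∈ 𝓝 u :=
    (isOpen_lt continuous_const continuous_re).mem_nhds (show u.re / 2 < u.re by linarith)
  have hbound_int := (integrableOn_cpow_mul_cexp_neg_mul (a := a + 1) (w := (u.re / 2 : ℝ))
    (by rw [add_re, one_re]; linarith) (by rw [ofReal_re]; linarith)).norm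
  simp only [add_sub_cancel_right] at hbound_int
  have hderiv := hasDerivAt_integral_of_dominated_loc_of_deriv_le
    (μ := volume.restrict (Ioi (0 : ℝ)))
    (F := fun w (t : ℝ) ↦ (t : ℂ) ^ (a - 1) * (cexp (-(w * t)) - cexp (-(v * t))))
    (F' := fun w t ↦ -((t : ℂ) ^ a * cexp (-(w * t)))) hS (.of_forall fun _ ↦ by fun_prop)
    (integrableOn_cpow_mul_cexp_neg_mul_sub ha hu hv) (by fun_prop) ?_ hbound_int ?_
  · simpa only [integral_neg] using hderiv.2
  · filter_upwards [ae_restrict_mem measurableSet_Ioi]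
      with t (ht : 0 < t) w (hw : u.re / 2 < w.re)
    rw [norm_neg, norm_cpow_mul_cexp_neg_mul ht, norm_cpow_mul_cexp_neg_mul ht, ofReal_re]
    gcongr
  · filter_upwards [ae_restrict_mem measurableSet_Ioi] with t (ht : 0 < t) w _
    have hpow : (t : ℂ) ^ (a - 1) * t = (t : ℂ) ^ a := by
      have ht₀ : (t : ℂ) ≠ 0 := ofReal_ne_zero.2 ht.ne'
      rw [cpow_sub _ _ ht₀, cpow_one, div_mul_cancel₀ _ ht₀]
    have := ((((hasDerivAt_id w).mul_const (t : ℂ)).neg.cexp).sub_const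
      (cexp (-(v * t)))).const_mul ((t : ℂ) ^ (a - 1))
    refine this.congr_deriv ?_
    rw [← hpow]
    simp only [Pi.neg_apply, id_eq, one_mul]
    ring

lemma differentiableOn_integral_cpow_mul_cexp_neg_mul (ha : 0 < a.re) :
    DifferentiableOn ℂ (fun w ↦ ∫ t in Ioi (0 : ℝ), (t : ℂ) ^ (a - 1) * cexp (-(w * t)))
      {w | 0 < w.re} := by
  intro w (hw : 0 < w.re)
  have hsplit : ∀ w' ∈ {w : ℂ | 0 < w.re},
      (∫ t in Ioi (0 : ℝ), (t : ℂ) ^ (a - 1) * cexp (-(w' * t))) =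
        (∫ t in Ioi (0 : ℝ), (t : ℂ) ^ (a - 1) * (cexp (-(w' * t)) - cexp (-(1 * t)))) +
          ∫ t in Ioi (0 : ℝ), (t : ℂ) ^ (a - 1) * cexp (-(1 * t)) := by
    intro w' (hw' : 0 < w'.re)
    simp_rw [mul_sub]
    rw [integral_sub (integrableOn_cpow_mul_cexp_neg_mul ha hw')
      (integrableOn_cpow_mul_cexp_neg_mul ha (by simp)), sub_add_cancel]
  have hdiff := (hasDerivAt_integral_cpow_mul_cexp_neg_mul_sub (a := a) (v := 1) (by linarith)
    hw (by simp)).differentiableAt.add_const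
      (∫ t in Ioi (0 : ℝ), (t : ℂ) ^ (a - 1) * cexp (-(1 * t)))
  exact (hdiff.congr_of_eventuallyEq (Filter.eventually_of_mem
    ((isOpen_lt continuous_const continuous_re).mem_nhds hw) hsplit)).differentiableWithinAt

theorem integral_cpow_mul_cexp_neg_mul_Ioi_of_re_pos (ha : 0 < a.re) (hw : 0 < w.re) :
    ∫ t in Ioi (0 : ℝ), (t : ℂ) ^ (a - 1) * cexp (-(w * t)) = Gamma a * w ^ (-a) := by
  refine eqOn_re_pos_of_eq_ofReal (g := fun w ↦ Gamma a * w ^ (-a))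
    (differentiableOn_integral_cpow_mul_cexp_neg_mul ha) (fun w (hw : 0 < w.re) ↦ ?_)
    (fun r hr ↦ ?_) hw
  · exact ((differentiableAt_id.cpow_const (Or.inl hw)).const_mul _).differentiableWithinAt
  · rw [integral_cpow_mul_exp_neg_mul_Ioi ha hr, one_div,
      inv_cpow _ _ (by simp [arg_ofReal_of_nonneg hr.le, Real.pi_ne_zero.symm]), ← cpow_neg,
      mul_comm]

theorem integral_cpow_mul_cexp_neg_mul_sub_cexp_neg_mul (ha : -1 < a.re) (ha₀ : a ≠ 0)
    (hu : 0 < u.re) (hv : 0 < v.re) :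
    ∫ t in Ioi (0 : ℝ), (t : ℂ) ^ (a - 1) * (cexp (-(u * t)) - cexp (-(v * t))) =
      Gamma a * (u ^ (-a) - v ^ (-a)) := by
  have hU : IsOpen {w : ℂ | 0 < w.re} := isOpen_lt continuous_const continuous_re
  have hlhs : ∀ w ∈ {w : ℂ | 0 < w.re}, HasDerivAt
      (fun u ↦ ∫ t in Ioi (0 : ℝ), (t : ℂ) ^ (a - 1) * (cexp (-(u * t)) - cexp (-(v * t))))
      (-(Gamma (a + 1) * w ^ (-a - 1))) w := by
    intro w (hw : 0 < w.re)
    have := hasDerivAt_integral_cpow_mul_cexp_neg_mul_sub ha hw hv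
    rwa [← add_sub_cancel_right a 1, integral_cpow_mul_cexp_neg_mul_Ioi_of_re_pos
      (by rw [add_re, one_re]; linarith) hw, add_sub_cancel_right, neg_add'] at this
  have hrhs : ∀ w ∈ {w : ℂ | 0 < w.re}, HasDerivAt (fun u ↦ Gamma a * (u ^ (-a) - v ^ (-a)))
      (-(Gamma (a + 1) * w ^ (-a - 1))) w := by
    intro w (hw : 0 < w.re)
    refine ((((hasDerivAt_id w).cpow_const (Or.inl hw)).sub_const _).const_mul _).congr_deriv ?_
    rw [Gamma_add_one a ha₀]
    simp only [id_eq, mul_one]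
    ring
  refine hU.eqOn_of_deriv_eq (convex_halfSpace_re_gt 0).isPreconnected
    (fun w hw ↦ (hlhs w hw).differentiableAt.differentiableWithinAt)
    (fun w hw ↦ (hrhs w hw).differentiableAt.differentiableWithinAt)
    (fun w hw ↦ (hlhs w hw).deriv.trans (hrhs w hw).deriv.symm) hv (by simp) hu

end LaplaceGamma

theorem tempered_stable_characteristic_integral_general
    (α lam β : ℝ) (hβ : β ∈ Set.Ioo (0:ℝ) 1)
    (z : ℂ) (hz : ‖z‖ < lam) :
    (∫ x in Set.Ioi (0:ℝ),
        (Complex.exp (Complex.I * z * (x:ℂ)) - 1) *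
          ((α * x ^ (-(1 + β)) * Real.exp (-lam * x) : ℝ) : ℂ))
      = (α : ℂ) * Complex.Gamma (-(β : ℂ)) *
          (((lam : ℂ) - Complex.I * z) ^ (β : ℂ) - (lam : ℂ) ^ (β : ℂ)) := by
  have hlam : 0 < lam := (norm_nonneg z).trans_lt hz
  have hu : 0 < ((lam : ℂ) - I * z).re := by
    simp only [sub_re, ofReal_re, mul_re, I_re, I_im, zero_mul, one_mul, zero_sub, sub_neg_eq_add]
    linarith [abs_im_le_norm z, neg_abs_le z.im]
  have hintegrand : ∀ x ∈ Ioi (0 : ℝ),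
      (cexp (I * z * x) - 1) * ((α * x ^ (-(1 + β)) * Real.exp (-lam * x) : ℝ) : ℂ) =
        α * ((x : ℂ) ^ (-(β : ℂ) - 1) *
          (cexp (-((lam - I * z) * x)) - cexp (-(lam * x)))) := by
    intro x (hx : 0 < x)
    have hexp : cexp (-((lam - I * z) * x)) = cexp (I * z * x) * cexp (-(lam * x)) := by
      rw [← Complex.exp_add]; ring_nf
    rw [hexp, ofReal_mul, ofReal_mul, ofReal_cpow hx.le, ofReal_exp]
    push_cast
    ring_nf
  rw [setIntegral_congr_fun measurableSet_Ioi hintegrand, integral_const_mul,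
    integral_cpow_mul_cexp_neg_mul_sub_cexp_neg_mul (by rw [neg_re, ofReal_re]; linarith [hβ.2])
      (by simpa using hβ.1.ne') hu (by simpa), neg_neg, mul_assoc]

/-- For parameters `α, λ > 0` and `β ∈ (0,1)`, and any complex `z` with
`|z| < λ`, the integral `∫₀^∞ (e^{izx} − 1) · α x^{−(1+β)} e^{−λx} dx` equals
`α Γ(−β) [(λ − iz)^β − λ^β]` (principal branch powers). -/
theorem tempered_stable_characteristic_integral
    (α lam β : ℝ) (hα : 0 < α) (hlam : 0 < lam) (hβ : β ∈ Set.Ioo (0:ℝ) 1)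
    (z : ℂ) (hz : ‖z‖ < lam) :
    (∫ x in Set.Ioi (0:ℝ),
        (Complex.exp (Complex.I * z * (x:ℂ)) - 1) *
          ((α * x ^ (-(1 + β)) * Real.exp (-lam * x) : ℝ) : ℂ))
      = (α : ℂ) * Complex.Gamma (-(β : ℂ)) *
          (((lam : ℂ) - Complex.I * z) ^ (β : ℂ) - (lam : ℂ) ^ (β : ℂ)) :=
  tempered_stable_characteristic_integral_general α lam β hβ z hz
end

section
/- For α, λ > 0, β ∈ (0,1), and |z| < λ (z complex), the series identity α ∑_{n≥1} (iz)^n/n! · λ^{β−n} Γ(n−β) = α Γ(−β) λ^β [(1 − iz/λ)^β − 1] holds, where the power uses the principal branch. -/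
/-!
Since `Γ(n - β) = (-1)ⁿ n! (β choose n) Γ(-β)` (the Pochhammer recursion of `Γ`), the `n`-th term
of the series equals `Γ(-β) λ^β (β choose n) (-iz/λ)ⁿ`, and the sum over `n ≥ 1` is the generalized
binomial series of `(1 - iz/λ)^β - 1`, which converges because `‖iz/λ‖ < 1`.
-/

open Complex
open scoped Nat

theorem Ring.choose_eq_descPochhammer_eval_div_factorial {K : Type*} [Field K] [CharZero K]
    (a : K) (n : ℕ) : Ring.choose a n = (descPochhammer K n).eval a / n ! := by
  rw [Ring.choose_eq_smul, ← Polynomial.aeval_eq_smeval, ← descPochhammer_map (algebraMap ℤ K),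
    Polynomial.eval_map_algebraMap, smul_eq_mul, inv_mul_eq_div]

namespace Complex

theorem hasSum_choose_mul_pow {a x : ℂ} (hx : ‖x‖ < 1) :
    HasSum (fun n => Ring.choose a n * x ^ n) ((1 + x) ^ a) := by
  have := (one_add_cpow_hasFPowerSeriesOnBall_zero (a := a)).hasSum (y := x)
    (by simpa [← ofReal_norm, enorm_eq_nnnorm] using hx)
  simpa [binomialSeries, FormalMultilinearSeries.ofScalars_apply_eq, mul_comm] using this

theorem hasSum_choose_succ_mul_pow {a x : ℂ} (hx : ‖x‖ < 1) :
    HasSum (fun n => Ring.choose a (n + 1) * x ^ (n + 1)) ((1 + x) ^ a - 1) := by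
  simpa using (hasSum_nat_add_iff' 1).mpr (hasSum_choose_mul_pow (a := a) hx)

theorem Gamma_natCast_sub {a : ℂ} (ha : ∀ k : ℕ, a ≠ k) (n : ℕ) :
    Gamma (n - a) = (-1) ^ n * n ! * Ring.choose a n * Gamma (-a) := by
  have hΓ : Gamma (-a) ≠ 0 := Gamma_ne_zero fun k h => ha k (neg_inj.mp h)
  have hfact : (n ! : ℂ) ≠ 0 := by exact_mod_cast n.factorial_ne_zero
  have hpoch := Gamma_add_nat_div_Gamma_eq (n := n) (-a) fun k h => ha k (neg_inj.mp h)
  rw [div_eq_iff hΓ, ascPochhammer_eval_neg_eq_descPochhammer] at hpoch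
  rw [Ring.choose_eq_descPochhammer_eval_div_factorial, ← neg_add_eq_sub, hpoch]
  field_simp

end Complex

theorem pow_div_factorial_mul_rpow_mul_Gamma_eq_choose {lam β : ℝ} (hlam : 0 < lam)
    (hβ : ∀ k : ℕ, β ≠ k) (w : ℂ) (m : ℕ) :
    w ^ m / m ! * ((lam ^ (β - m) : ℝ) : ℂ) * ((Real.Gamma (m - β) : ℝ) : ℂ) =
      Real.Gamma (-β) * ((lam ^ β : ℝ) : ℂ) * (Ring.choose (β : ℂ) m * (-(w / lam)) ^ m) := by
  have hβ' : ∀ k : ℕ, (β : ℂ) ≠ k := fun k h => hβ k (by exact_mod_cast h)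
  have hlam' : (lam : ℂ) ≠ 0 := by exact_mod_cast hlam.ne'
  have hfact : (m ! : ℂ) ≠ 0 := by exact_mod_cast m.factorial_ne_zero
  rw [Real.rpow_sub hlam, Real.rpow_natCast, ← Complex.Gamma_ofReal, ← Complex.Gamma_ofReal]
  push_cast
  rw [Gamma_natCast_sub hβ', neg_pow (w / lam), div_pow]
  field_simp

theorem tempered_stable_series_identity_general
    (α lam β : ℝ) (hlam : 0 < lam) (hβ : β ∈ Set.Ioo (0:ℝ) 1)
    (z : ℂ) (hz : ‖z‖ < lam) :
    (α : ℂ) * ∑' n : ℕ,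
        (Complex.I * z) ^ (n + 1) / (Nat.factorial (n + 1) : ℂ) *
          ((lam ^ (β - ((n : ℝ) + 1)) : ℝ) : ℂ) * ((Real.Gamma (((n : ℝ) + 1) - β) : ℝ) : ℂ)
      = (α : ℂ) * ((Real.Gamma (-β) : ℝ) : ℂ) * ((lam ^ β : ℝ) : ℂ) *
          ((1 - Complex.I * z / (lam : ℂ)) ^ (β : ℂ) - 1) := by
  have hβ_nat : ∀ k : ℕ, β ≠ k := by
    rintro k rfl
    have h0 : 0 < k := by exact_mod_cast hβ.1
    have h1 : k < 1 := by exact_mod_cast hβ.2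
    omega
  have hx : ‖-(I * z / lam)‖ < 1 := by
    rwa [norm_neg, norm_div, norm_mul, norm_I, one_mul, norm_real, Real.norm_of_nonneg hlam.le,
      div_lt_one hlam]
  have hsum := (hasSum_choose_succ_mul_pow (a := β) hx).mul_left
    ((Real.Gamma (-β) : ℂ) * ((lam ^ β : ℝ) : ℂ))
  rw [← sub_eq_add_neg] at hsum
  rw [(hsum.congr_fun fun n => ?_).tsum_eq]
  · ring
  · simpa using pow_div_factorial_mul_rpow_mul_Gamma_eq_choose hlam hβ_nat (I * z) (n + 1)

/-- For `α, λ > 0`, `β ∈ (0,1)`, and complex `z` with `|z| < λ`,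
`α ∑_{n≥1} (iz)^n/n! · λ^{β−n} Γ(n−β) = α Γ(−β) λ^β [(1 − iz/λ)^β − 1]`
(principal branch power). -/
theorem tempered_stable_series_identity
    (α lam β : ℝ) (hα : 0 < α) (hlam : 0 < lam) (hβ : β ∈ Set.Ioo (0:ℝ) 1)
    (z : ℂ) (hz : ‖z‖ < lam) :
    (α : ℂ) * ∑' n : ℕ,
        (Complex.I * z) ^ (n + 1) / (Nat.factorial (n + 1) : ℂ) *
          ((lam ^ (β - ((n : ℝ) + 1)) : ℝ) : ℂ) * ((Real.Gamma (((n : ℝ) + 1) - β) : ℝ) : ℂ)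
      = (α : ℂ) * ((Real.Gamma (-β) : ℝ) : ℂ) * ((lam ^ β : ℝ) : ℂ) *
          ((1 - Complex.I * z / (lam : ℂ)) ^ (β : ℂ) - 1) :=
  tempered_stable_series_identity_general α lam β hlam hβ z hz
end

section
/- With g(x) = (α/c) e^{−λx} x^{−(1+β)} 𝟙_{(1,∞)}(x) as above, the limit lim_{r→∞} (1/g(r)) ∫₁^{r−1} g(r−y) g(y) dy equals 2α/(βc). Equivalently, lim_{r→∞} ∫₁^{r−1} (r/((r−y)y))^{1+β} dy = 2/β. -/
/-! For `1 < y < r - 1` the exponential factors of `g (r - y) * g y` combine to `exp (-λ r)`, so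
`(g * g) r / g r = (α / c) * ∫₁^{r-1} (r / ((r - y) y))^{1+β} dy` and everything reduces to the second
limit. The integrand of the latter is symmetric under `y ↦ r - y`, so the integral is twice the one
over `[1, r/2]`; there `r / (r - y) ≤ 2` dominates it by `2^{1+β} y^{-(1+β)}`, and dominated
convergence gives the limit `2 ∫₁^∞ y^{-(1+β)} dy = 2 / β`. -/

open MeasureTheory Filter Set Topology intervalIntegral

theorem intervalIntegral.integral_eq_two_mul_integral_half_of_symmetric {f : ℝ → ℝ} {a b : ℝ}
    (hf : ∀ x, f (a + b - x) = f x) (hab : a ≤ b) (hint : IntervalIntegrable f volume a b) :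
    ∫ x in a..b, f x = 2 * ∫ x in a..(a + b) / 2, f x := by
  have hsub : ∀ {u v}, u ∈ Icc a b → v ∈ Icc a b → IntervalIntegrable f volume u v :=
    fun hu hv => hint.mono_set (uIcc_subset_uIcc (by rwa [uIcc_of_le hab]) (by rwa [uIcc_of_le hab]))
  have hmid : (a + b) / 2 ∈ Icc a b := ⟨by linarith, by linarith⟩
  have hreflect : ∫ x in (a + b) / 2..b, f x = ∫ x in a..(a + b) / 2, f x := calc
    _ = ∫ x in (a + b) / 2..b, f (a + b - x) := by simp only [hf]
    _ = ∫ x in a + b - b..a + b - (a + b) / 2, f x := integral_comp_sub_left f (a + b)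
    _ = _ := by congr 1 <;> ring
  rw [← integral_add_adjacent_intervals (hsub (left_mem_Icc.2 hab) hmid)
    (hsub hmid (right_mem_Icc.2 hab)), hreflect, two_mul]

section TailKernel

variable {s r y : ℝ}

theorem rpow_div_sub_mul_le (hs : 0 ≤ s) (hy : 0 < y) (hyr : y ≤ r / 2) :
    (r / ((r - y) * y)) ^ s ≤ 2 ^ s * y ^ (-s) := by
  have hry : 0 < r - y := by linarith
  calc (r / ((r - y) * y)) ^ s ≤ (2 / y) ^ s := by
        refine Real.rpow_le_rpow (div_nonneg (by linarith) (mul_pos hry hy).le) ?_ hs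
        rw [div_le_div_iff₀ (mul_pos hry hy) hy]
        nlinarith
    _ = 2 ^ s * y ^ (-s) := by
        rw [Real.div_rpow zero_le_two hy.le, Real.rpow_neg hy.le, div_eq_mul_inv]

theorem tendsto_rpow_div_sub_mul (hy : 0 < y) :
    Tendsto (fun r => (r / ((r - y) * y)) ^ s) atTop (𝓝 (y ^ (-s))) := by
  have hbase : Tendsto (fun r => (1 + y / (r - y)) * y⁻¹) atTop (𝓝 ((1 + 0) * y⁻¹)) :=
    (tendsto_const_nhds.add (tendsto_const_nhds.div_atTop
      (tendsto_atTop_add_const_right _ _ tendsto_id))).mul tendsto_const_nhds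
  rw [add_zero, one_mul] at hbase
  have hlim := hbase.rpow_const (p := s) (Or.inl (inv_ne_zero hy.ne'))
  rw [Real.inv_rpow hy.le, ← Real.rpow_neg hy.le] at hlim
  refine hlim.congr' ?_
  filter_upwards [eventually_gt_atTop y] with r hr
  have hry : r - y ≠ 0 := by linarith
  field_simp
  rw [sub_add_cancel]

theorem tendsto_integral_one_half_rpow_div_sub_mul (hs : 1 < s) :
    Tendsto (fun r => ∫ y in (1 : ℝ)..r / 2, (r / ((r - y) * y)) ^ s) atTop (𝓝 (1 / (s - 1))) := by
  set F : ℝ → ℝ → ℝ := fun r => (Ioc 1 (r / 2)).indicator fun y => (r / ((r - y) * y)) ^ s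
  have hval : ∫ y in Ioi (1 : ℝ), y ^ (-s) = 1 / (s - 1) := by
    rw [integral_Ioi_rpow_of_lt (by linarith) one_pos, Real.one_rpow,
      show -s + 1 = -(s - 1) by ring, div_neg, neg_div, neg_neg]
  have hdct : Tendsto (fun r => ∫ y in Ioi 1, F r y) atTop (𝓝 (1 / (s - 1))) := by
    rw [← hval]
    refine tendsto_integral_filter_of_dominated_convergence (fun y => 2 ^ s * y ^ (-s))
      (Eventually.of_forall fun r => ?_) (Eventually.of_forall fun r => ?_)
      ((integrableOn_Ioi_rpow_of_lt (by linarith) one_pos).const_mul _) ?_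
    · exact (Measurable.indicator (by fun_prop) measurableSet_Ioc).aestronglyMeasurable
    · refine (ae_restrict_iff' measurableSet_Ioi).2 (Eventually.of_forall fun y (hy : 1 < y) => ?_)
      dsimp only [F]
      by_cases hyr : y ∈ Ioc 1 (r / 2)
      · rw [indicator_of_mem hyr, Real.norm_of_nonneg (Real.rpow_nonneg ?_ _)]
        · exact rpow_div_sub_mul_le (by linarith) (by linarith) hyr.2
        · have := hyr.2
          exact div_nonneg (by linarith) (mul_nonneg (by linarith) (by linarith))
      · rw [indicator_of_notMem hyr, norm_zero]
        positivity
    · refine (ae_restrict_iff' measurableSet_Ioi).2 (Eventually.of_forall fun y (hy : 1 < y) => ?_)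
      refine (tendsto_rpow_div_sub_mul (by linarith)).congr' ?_
      filter_upwards [eventually_ge_atTop (2 * y)] with r hr
      dsimp only [F]
      rw [indicator_of_mem (show y ∈ Ioc 1 (r / 2) from ⟨hy, by linarith⟩)]
  refine hdct.congr' ?_
  filter_upwards [eventually_ge_atTop 2] with r hr
  rw [integral_of_le (by linarith), setIntegral_indicator measurableSet_Ioc,
    inter_eq_right.2 Ioc_subset_Ioi_self]

theorem tendsto_integral_rpow_div_sub_mul (hs : 1 < s) :
    Tendsto (fun r => ∫ y in (1 : ℝ)..r - 1, (r / ((r - y) * y)) ^ s) atTop (𝓝 (2 / (s - 1))) := by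
  have hlim := (tendsto_integral_one_half_rpow_div_sub_mul hs).const_mul 2
  rw [mul_one_div] at hlim
  refine hlim.congr' ?_
  filter_upwards [eventually_ge_atTop 2] with r hr
  have hcont : ContinuousOn (fun y => (r / ((r - y) * y)) ^ s) (uIcc 1 (r - 1)) := by
    rw [uIcc_of_le (by linarith)]
    refine ContinuousOn.rpow_const (continuousOn_const.div (by fun_prop) fun y hy => ?_)
      fun _ _ => Or.inr (by linarith)
    exact (mul_pos (by linarith [hy.2]) (by linarith [hy.1])).ne'
  rw [integral_eq_two_mul_integral_half_of_symmetric (fun y => ?_) (by linarith)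
    hcont.intervalIntegrable, show (1 + (r - 1)) / 2 = r / 2 by ring]
  rw [show 1 + (r - 1) - y = r - y by ring, sub_sub_cancel, mul_comm]

end TailKernel

theorem rpow_neg_mul_rpow_neg {s x y : ℝ} (hx : 0 < x) (hy : 0 < y) :
    x ^ (-s) * y ^ (-s) = (x + y) ^ (-s) * ((x + y) / (x * y)) ^ s := by
  have hxy : 0 < x + y := by linarith
  rw [Real.div_rpow hxy.le (by positivity), Real.mul_rpow hx.le hy.le, Real.rpow_neg hx.le,
    Real.rpow_neg hy.le, Real.rpow_neg hxy.le]
  have := (Real.rpow_pos_of_pos hxy s).ne'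
  field_simp

theorem integral_convolution_div_eq {α lam c s r : ℝ} {g : ℝ → ℝ}
    (hg : ∀ x, g x = if 1 < x then α / c * Real.exp (-lam * x) * x ^ (-s) else 0) (hr : 2 < r) :
    (∫ y in (1 : ℝ)..r - 1, g (r - y) * g y) / g r
      = α / c * ∫ y in (1 : ℝ)..r - 1, (r / ((r - y) * y)) ^ s := by
  have hgr : g r = α / c * (Real.exp (-lam * r) * r ^ (-s)) := by
    rw [hg, if_pos (by linarith), mul_assoc]
  have hconv : ∫ y in (1 : ℝ)..r - 1, g (r - y) * g y
      = g r * (α / c * ∫ y in (1 : ℝ)..r - 1, (r / ((r - y) * y)) ^ s) := by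
    rw [← intervalIntegral.integral_const_mul, ← intervalIntegral.integral_const_mul,
      integral_of_le (by linarith), integral_of_le (by linarith), integral_Ioc_eq_integral_Ioo,
      integral_Ioc_eq_integral_Ioo]
    refine setIntegral_congr_fun measurableSet_Ioo fun y (hy : y ∈ Ioo 1 (r - 1)) => ?_
    obtain ⟨hy1, hyr⟩ := hy
    have hexp : Real.exp (-lam * (r - y)) * Real.exp (-lam * y) = Real.exp (-lam * r) := by
      rw [← Real.exp_add]
      congr 1
      ring
    have hpow := rpow_neg_mul_rpow_neg (s := s) (by linarith : 0 < r - y) (by linarith : 0 < y)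
    rw [sub_add_cancel] at hpow
    rw [hg, hg, if_pos (by linarith), if_pos hy1, hgr]
    linear_combination (α / c) ^ 2 * (Real.exp (-lam * (r - y)) * Real.exp (-lam * y)) * hpow
      + (α / c) ^ 2 * r ^ (-s) * (r / ((r - y) * y)) ^ s * hexp
  -- If `α / c = 0` then `g = 0`, and both sides are `0` through `x / 0 = 0`.
  rcases eq_or_ne (α / c) 0 with hαc | hαc
  · simp [hconv, hgr, hαc]
  · rw [hconv, mul_div_cancel_left₀ _ (by rw [hgr]; positivity)]

theorem temperedStable_convolution_tail_limit_general
    (α lam β c : ℝ) (hβ : β ∈ Set.Ioo (0:ℝ) 1)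
    (g : ℝ → ℝ)
    (hg : ∀ x : ℝ, g x =
      if 1 < x then α / c * Real.exp (-lam * x) * x ^ (-(1 + β)) else 0) :
    Filter.Tendsto
        (fun r : ℝ => (∫ y in (1:ℝ)..(r - 1), g (r - y) * g y) / g r)
        Filter.atTop (nhds (2 * α / (β * c))) ∧
      Filter.Tendsto
        (fun r : ℝ => ∫ y in (1:ℝ)..(r - 1), (r / ((r - y) * y)) ^ (1 + β))
        Filter.atTop (nhds (2 / β)) := by
  have hkernel : Tendsto (fun r : ℝ => ∫ y in (1:ℝ)..(r - 1), (r / ((r - y) * y)) ^ (1 + β))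
      atTop (𝓝 (2 / β)) := by
    simpa using tendsto_integral_rpow_div_sub_mul (s := 1 + β) (by linarith [hβ.1])
  refine ⟨?_, hkernel⟩
  have hlim := hkernel.const_mul (α / c)
  rw [show α / c * (2 / β) = 2 * α / (β * c) by ring] at hlim
  exact hlim.congr' <| (eventually_gt_atTop 2).mono fun r hr =>
    (integral_convolution_div_eq hg hr).symm

/-- With `g(x) = (α/c) e^{−λx} x^{−(1+β)} 𝟙_{(1,∞)}(x)`
(`α,λ > 0`, `β ∈ (0,1)`, `c = α∫₁^∞ e^{−λx} x^{−(1+β)} dx`),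
`lim_{r→∞} (1/g(r)) ∫₁^{r−1} g(r−y) g(y) dy = 2α/(βc)`; equivalently,
`lim_{r→∞} ∫₁^{r−1} (r/((r−y)y))^{1+β} dy = 2/β`. -/
theorem temperedStable_convolution_tail_limit
    (α lam β c : ℝ) (hα : 0 < α) (hlam : 0 < lam) (hβ : β ∈ Set.Ioo (0:ℝ) 1)
    (hc : c = α * ∫ x in Set.Ioi (1:ℝ), Real.exp (-lam * x) * x ^ (-(1 + β)))
    (g : ℝ → ℝ)
    (hg : ∀ x : ℝ, g x =
      if 1 < x then α / c * Real.exp (-lam * x) * x ^ (-(1 + β)) else 0) :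
    Filter.Tendsto
        (fun r : ℝ => (∫ y in (1:ℝ)..(r - 1), g (r - y) * g y) / g r)
        Filter.atTop (nhds (2 * α / (β * c))) ∧
      Filter.Tendsto
        (fun r : ℝ => ∫ y in (1:ℝ)..(r - 1), (r / ((r - y) * y)) ^ (1 + β))
        Filter.atTop (nhds (2 / β)) :=
  temperedStable_convolution_tail_limit_general α lam β c hβ g hg
end

section
/- Let F₁ and F₂ be Lévy measures on ℝ with densities f_j(x) = α_j⁺ x^{−(1+β_j⁺)} e^{−λ_j⁺ x}𝟙_{(0,∞)}(x) + α_j⁻ |x|^{−(1+β_j⁻)} e^{−λ_j⁻|x|}𝟙_{(−∞,0)}(x) for j = 1,2, with all α_j^±, λ_j^± > 0 and β_j^± ∈ [0,1), and let Φ = dF₂/dF₁. Then ∫_ℝ (1 − √Φ(x))² F₁(dx) < ∞ if and only if α₁⁺ = α₂⁺, α₁⁻ = α₂⁻, β₁⁺ = β₂⁺, and β₁⁻ = β₂⁻. -/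
open MeasureTheory Set Filter Topology Real

/-
On each half-line `(1 - √(f₂ / f₁))² f₁ = (√f₁ - √f₂)²`, so everything reduces to one-sided
densities `α x^{-(1+β)} e^{-λx}` on `(0, ∞)`. If `β₂ ≤ β₁` then
`x^{(1+β₁)/2} (√f₁ - √f₂) → √α₁ - √α₂ · 0^{(β₁-β₂)/2}` as `x → 0⁺`, where `0^{(β₁-β₂)/2}` is
`1` if `β₁ = β₂` and `0` otherwise. Unless `α₁ = α₂` and `β₁ = β₂` this limit is nonzero, and
`(√f₁ - √f₂)²` is then at least a multiple of the non-integrable `x^{-(1+β₁)}` near `0`.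
If `α` and `β` agree, `|e^{-λ₁x/2} - e^{-λ₂x/2}| ≤ |λ₁ - λ₂| x e^{-min λ x/2}` bounds
`(√f₁ - √f₂)²` by a multiple of the integrable `x^{1-β} e^{-min λ x}`.
-/

theorem integrable_iff_integrableOn_Iio_and_Ioi {E : Type*} [NormedAddCommGroup E]
    {μ : Measure ℝ} [NullSingletonClass μ] {g : ℝ → E} (a : ℝ) :
    Integrable g μ ↔ IntegrableOn g (Iio a) μ ∧ IntegrableOn g (Ioi a) μ := by
  rw [← integrableOn_union, Iio_union_Ioi, IntegrableOn, restrict_compl_singleton]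

theorem integrableOn_Iio_iff_comp_neg {E : Type*} [NormedAddCommGroup E] {g : ℝ → E} (a : ℝ) :
    IntegrableOn g (Iio a) ↔ IntegrableOn (fun x => g (-x)) (Ioi (-a)) := by
  rw [← (Measure.measurePreserving_neg volume).integrableOn_comp_preimage
    (Homeomorph.neg ℝ).measurableEmbedding, neg_preimage, neg_Iio]
  rfl

theorem sq_one_sub_sqrt_div_mul {A : ℝ} (B : ℝ) (hA : 0 < A) :
    (1 - √(B / A)) ^ 2 * A = (√A - √B) ^ 2 := by
  have hA' : √A ≠ 0 := (sqrt_pos.mpr hA).ne'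
  rw [sqrt_div' B hA.le]
  field_simp
  rw [sq_sqrt hA.le, mul_comm]

theorem abs_exp_neg_mul_sub_exp_neg_mul_le {x : ℝ} (p q : ℝ) (hx : 0 ≤ x) :
    |exp (-p * x) - exp (-q * x)| ≤ |p - q| * x * exp (-min p q * x) := by
  wlog hpq : p ≤ q generalizing p q
  · simpa only [abs_sub_comm, min_comm] using this q p (le_of_not_ge hpq)
  have hdiff : exp (-p * x) - exp (-q * x) = exp (-p * x) * (1 - exp (-((q - p) * x))) := by
    rw [mul_sub, mul_one, ← exp_add]; ring_nf
  have hle : 1 - exp (-((q - p) * x)) ≤ (q - p) * x := by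
    linarith [one_sub_le_exp_neg ((q - p) * x)]
  have hnonneg : 0 ≤ 1 - exp (-((q - p) * x)) := by
    simp only [sub_nonneg, exp_le_one_iff, neg_nonpos]
    exact mul_nonneg (sub_nonneg.mpr hpq) hx
  rw [hdiff, min_eq_left hpq, abs_mul, abs_of_pos (exp_pos _), abs_of_nonneg hnonneg,
    abs_sub_comm, abs_of_nonneg (sub_nonneg.mpr hpq), mul_comm _ (exp _)]
  exact mul_le_mul_of_nonneg_left hle (exp_pos _).le

/-- The one-sided tempered stable density `α x^{-(1+β)} e^{-λx}`, with `(a, b, l) = (α, β, λ)`. -/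
noncomputable def temperedStableDensity (a b l x : ℝ) : ℝ := a * x ^ (-(1 + b)) * exp (-l * x)

theorem sqrt_temperedStableDensity {a b l x : ℝ} (ha : 0 ≤ a) (hx : 0 < x) :
    √(temperedStableDensity a b l x) = √a * x ^ (-(1 + b) / 2) * exp (-l * x / 2) := by
  have hpow : √(x ^ (-(1 + b))) = x ^ (-(1 + b) / 2) := by
    rw [sqrt_eq_rpow, ← rpow_mul hx.le, mul_one_div]
  rw [temperedStableDensity, sqrt_mul (by positivity), sqrt_mul ha, exp_half, hpow]

theorem measurable_sqrt_temperedStableDensity (a b l : ℝ) :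
    Measurable fun x => √(temperedStableDensity a b l x) := by
  unfold temperedStableDensity; fun_prop

theorem integrableOn_sqrt_temperedStableDensity_sub_sq {a b : ℝ} (l₁ l₂ : ℝ) (ha : 0 ≤ a)
    (hb : b < 2) (hl₁ : 0 < l₁) (hl₂ : 0 < l₂) :
    IntegrableOn (fun x => (√(temperedStableDensity a b l₁ x)
      - √(temperedStableDensity a b l₂ x)) ^ 2) (Ioi 0) := by
  have hdom : IntegrableOn
      (fun x => a * ((l₁ - l₂) / 2) ^ 2 * (x ^ (1 - b) * exp (-min l₁ l₂ * x))) (Ioi 0) := by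
    have h : IntegrableOn (fun x => x ^ (1 - b) * exp (-min l₁ l₂ * x)) (Ioi 0) := by
      simpa only [rpow_one] using
        integrableOn_rpow_mul_exp_neg_mul_rpow (by linarith) one_pos (lt_min hl₁ hl₂)
    exact h.const_mul _
  refine hdom.mono' (((measurable_sqrt_temperedStableDensity a b l₁).sub
    (measurable_sqrt_temperedStableDensity a b l₂)).pow_const 2).aestronglyMeasurable ?_
  filter_upwards [ae_restrict_mem measurableSet_Ioi] with x (hx : 0 < x)
  have hexp := abs_exp_neg_mul_sub_exp_neg_mul_le (l₁ / 2) (l₂ / 2) hx.le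
  have hfactor : √(temperedStableDensity a b l₁ x) - √(temperedStableDensity a b l₂ x)
      = √a * x ^ (-(1 + b) / 2) * (exp (-(l₁ / 2) * x) - exp (-(l₂ / 2) * x)) := by
    rw [sqrt_temperedStableDensity ha hx, sqrt_temperedStableDensity ha hx]; ring_nf
  have hpow : (x ^ (-(1 + b) / 2)) ^ 2 * x ^ 2 = x ^ (1 - b) := by
    rw [← rpow_two, ← rpow_mul hx.le, ← rpow_two, ← rpow_add hx]; ring_nf
  rw [norm_pow, Real.norm_eq_abs, sq_abs, hfactor]
  calc (√a * x ^ (-(1 + b) / 2) * (exp (-(l₁ / 2) * x) - exp (-(l₂ / 2) * x))) ^ 2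
      = a * (x ^ (-(1 + b) / 2)) ^ 2 * |exp (-(l₁ / 2) * x) - exp (-(l₂ / 2) * x)| ^ 2 := by
        rw [sq_abs, mul_pow, mul_pow, sq_sqrt ha]
    _ ≤ a * (x ^ (-(1 + b) / 2)) ^ 2 *
          (|l₁ / 2 - l₂ / 2| * x * exp (-min (l₁ / 2) (l₂ / 2) * x)) ^ 2 := by
        gcongr
    _ = _ := by
        have hexp_sq : exp (-(min l₁ l₂ / 2) * x) ^ 2 = exp (-min l₁ l₂ * x) := by
          rw [← exp_nat_mul]; ring_nf
        rw [min_div_div_right two_pos.le, mul_pow, mul_pow, sq_abs, hexp_sq, ← hpow]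
        ring

theorem not_integrableOn_Ioi_of_tendsto_rpow_mul {f : ℝ → ℝ} {s L : ℝ} (hs : 1 ≤ s)
    (hL : L ≠ 0) (hf : Tendsto (fun x => x ^ s * f x) (𝓝[>] 0) (𝓝 L)) :
    ¬ IntegrableOn f (Ioi 0) := by
  intro hint
  obtain ⟨ε, hε, hbound⟩ : ∃ ε > 0, ∀ x ∈ Ioo 0 ε, |L| / 2 ≤ |x ^ s * f x| :=
    mem_nhdsGT_iff_exists_Ioo_subset.mp
      (hf.abs.eventually_const_le (half_lt_self (abs_pos.mpr hL)))
  have hpow : IntegrableOn (fun x => x ^ (-s)) (Ioo 0 ε) := by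
    refine ((hint.mono_set Ioo_subset_Ioi_self).norm.const_mul (2 / |L|)).mono'
      ((measurable_id.pow_const _).aestronglyMeasurable) ?_
    filter_upwards [ae_restrict_mem measurableSet_Ioo] with x hx
    have hxs : 0 < x ^ s := rpow_pos_of_pos hx.1 s
    have h := hbound x hx
    rw [abs_mul, abs_of_pos hxs] at h
    rw [norm_of_nonneg (rpow_nonneg hx.1.le _), rpow_neg hx.1.le, norm_eq_abs,
      div_mul_eq_mul_div, le_div_iff₀ (abs_pos.mpr hL), inv_mul_le_iff₀ hxs]
    linarith
  rw [intervalIntegral.integrableOn_Ioo_rpow_iff hε] at hpow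
  linarith

theorem tendsto_rpow_mul_sqrt_temperedStableDensity_sub_sq {a₁ a₂ b₁ b₂ : ℝ} (l₁ l₂ : ℝ)
    (ha₁ : 0 ≤ a₁) (ha₂ : 0 ≤ a₂) (hb : b₂ ≤ b₁) :
    Tendsto (fun x => x ^ (1 + b₁) *
        (√(temperedStableDensity a₁ b₁ l₁ x) - √(temperedStableDensity a₂ b₂ l₂ x)) ^ 2)
      (𝓝[>] 0) (𝓝 ((√a₁ - √a₂ * 0 ^ ((b₁ - b₂) / 2)) ^ 2)) := by
  set G : ℝ → ℝ := fun x =>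
    √a₁ * exp (-l₁ * x / 2) - √a₂ * x ^ ((b₁ - b₂) / 2) * exp (-l₂ * x / 2)
  have hG : ContinuousAt G 0 := by
    have := Real.continuousAt_rpow_const 0 ((b₁ - b₂) / 2) (Or.inr (by linarith))
    fun_prop
  have hlim : Tendsto (fun x => G x ^ 2) (𝓝[>] 0)
      (𝓝 ((√a₁ - √a₂ * 0 ^ ((b₁ - b₂) / 2)) ^ 2)) := by
    have hG0 : G 0 = √a₁ - √a₂ * 0 ^ ((b₁ - b₂) / 2) := by simp [G]
    rw [← hG0]
    exact (hG.pow 2).tendsto.mono_left nhdsWithin_le_nhds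
  refine hlim.congr' (eventually_nhdsWithin_of_forall fun x (hx : 0 < x) => ?_)
  have hsplit : x ^ (1 + b₁) = (x ^ ((1 + b₁) / 2)) ^ 2 := by
    rw [← rpow_natCast, ← rpow_mul hx.le]; norm_num
  have h₁ : x ^ ((1 + b₁) / 2) * x ^ (-(1 + b₁) / 2) = 1 := by
    rw [← rpow_add hx]; ring_nf; exact rpow_zero x
  have h₂ : x ^ ((1 + b₁) / 2) * x ^ (-(1 + b₂) / 2) = x ^ ((b₁ - b₂) / 2) := by
    rw [← rpow_add hx]; ring_nf
  show G x ^ 2 = x ^ (1 + b₁) * _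
  rw [hsplit, ← mul_pow, sqrt_temperedStableDensity ha₁ hx, sqrt_temperedStableDensity ha₂ hx]
  congr 1
  linear_combination (√a₂ * exp (-l₂ * x / 2)) * h₂ - (√a₁ * exp (-l₁ * x / 2)) * h₁

theorem not_integrableOn_sqrt_temperedStableDensity_sub_sq {a₁ a₂ b₁ b₂ : ℝ} (l₁ l₂ : ℝ)
    (ha₁ : 0 < a₁) (ha₂ : 0 < a₂) (hb₁ : 0 ≤ b₁) (hb : b₂ ≤ b₁) (hne : a₁ ≠ a₂ ∨ b₁ ≠ b₂) :
    ¬ IntegrableOn (fun x => (√(temperedStableDensity a₁ b₁ l₁ x)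
      - √(temperedStableDensity a₂ b₂ l₂ x)) ^ 2) (Ioi 0) := by
  refine not_integrableOn_Ioi_of_tendsto_rpow_mul (by linarith) (pow_ne_zero 2 ?_)
    (tendsto_rpow_mul_sqrt_temperedStableDensity_sub_sq l₁ l₂ ha₁.le ha₂.le hb)
  rcases hb.lt_or_eq with hlt | rfl
  · rw [zero_rpow (by linarith), mul_zero, sub_zero]
    exact (sqrt_pos.mpr ha₁).ne'
  · rw [sub_self, zero_div, rpow_zero, mul_one, sub_ne_zero]
    exact fun h => hne.resolve_right (not_not_intro rfl) ((sqrt_inj ha₁.le ha₂.le).mp h)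

theorem integrableOn_sqrt_temperedStableDensity_sub_sq_iff {a₁ a₂ b₁ b₂ l₁ l₂ : ℝ}
    (ha₁ : 0 < a₁) (ha₂ : 0 < a₂) (hb₁ : 0 ≤ b₁) (hb₂ : 0 ≤ b₂) (hb₁₂ : b₁ < 2)
    (hl₁ : 0 < l₁) (hl₂ : 0 < l₂) :
    IntegrableOn (fun x => (√(temperedStableDensity a₁ b₁ l₁ x)
      - √(temperedStableDensity a₂ b₂ l₂ x)) ^ 2) (Ioi 0) ↔ a₁ = a₂ ∧ b₁ = b₂ := by
  refine ⟨fun hint => ?_, fun ⟨ha, hb⟩ => ?_⟩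
  · by_contra hne
    rw [not_and_or] at hne
    rcases le_total b₂ b₁ with hb | hb
    · exact not_integrableOn_sqrt_temperedStableDensity_sub_sq l₁ l₂ ha₁ ha₂ hb₁ hb hne hint
    · refine not_integrableOn_sqrt_temperedStableDensity_sub_sq l₂ l₁ ha₂ ha₁ hb₂ hb
        (hne.imp Ne.symm Ne.symm) ?_
      simpa only [← neg_sub (√(temperedStableDensity a₁ b₁ l₁ _)), neg_sq] using hint
  · subst ha hb
    exact integrableOn_sqrt_temperedStableDensity_sub_sq l₁ l₂ ha₁.le hb₁₂ hl₁ hl₂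

/-- For two tempered stable Lévy densities `f₁, f₂` and
`Φ = f₂/f₁`, the Hellinger-type integral `∫_ℝ (1 − √Φ(x))² F₁(dx)` is finite if and
only if `α₁⁺ = α₂⁺`, `α₁⁻ = α₂⁻`, `β₁⁺ = β₂⁺` and `β₁⁻ = β₂⁻`. -/
theorem temperedStable_equivalence_criterion
    (a1p a1m b1p b1m l1p l1m a2p a2m b2p b2m l2p l2m : ℝ)
    (ha1p : 0 < a1p) (ha1m : 0 < a1m) (hl1p : 0 < l1p) (hl1m : 0 < l1m)
    (ha2p : 0 < a2p) (ha2m : 0 < a2m) (hl2p : 0 < l2p) (hl2m : 0 < l2m)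
    (hb1p : b1p ∈ Set.Ico (0:ℝ) 1) (hb1m : b1m ∈ Set.Ico (0:ℝ) 1)
    (hb2p : b2p ∈ Set.Ico (0:ℝ) 1) (hb2m : b2m ∈ Set.Ico (0:ℝ) 1)
    (f₁ f₂ : ℝ → ℝ)
    (hf₁ : ∀ x : ℝ, f₁ x =
      if 0 < x then a1p * x ^ (-(1 + b1p)) * Real.exp (-l1p * x)
      else if x < 0 then a1m * |x| ^ (-(1 + b1m)) * Real.exp (-l1m * |x|)
      else 0)
    (hf₂ : ∀ x : ℝ, f₂ x =
      if 0 < x then a2p * x ^ (-(1 + b2p)) * Real.exp (-l2p * x)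
      else if x < 0 then a2m * |x| ^ (-(1 + b2m)) * Real.exp (-l2m * |x|)
      else 0) :
    Integrable (fun x => (1 - Real.sqrt (f₂ x / f₁ x)) ^ 2 * f₁ x)
      ↔ (a1p = a2p ∧ a1m = a2m ∧ b1p = b2p ∧ b1m = b2m) := by
  have hpos : EqOn (fun x => (1 - √(f₂ x / f₁ x)) ^ 2 * f₁ x)
      (fun x => (√(temperedStableDensity a1p b1p l1p x)
        - √(temperedStableDensity a2p b2p l2p x)) ^ 2) (Ioi 0) := fun x (hx : 0 < x) => by
    simp only [hf₁, hf₂, if_pos hx]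
    exact sq_one_sub_sqrt_div_mul _ (by positivity)
  have hneg : EqOn (fun x => (1 - √(f₂ (-x) / f₁ (-x))) ^ 2 * f₁ (-x))
      (fun x => (√(temperedStableDensity a1m b1m l1m x)
        - √(temperedStableDensity a2m b2m l2m x)) ^ 2) (Ioi 0) := fun x (hx : 0 < x) => by
    simp only [hf₁, hf₂, if_neg (neg_nonpos.mpr hx.le).not_gt, if_pos (neg_neg_iff_pos.mpr hx),
      abs_neg, abs_of_pos hx]
    exact sq_one_sub_sqrt_div_mul _ (by positivity)
  rw [integrable_iff_integrableOn_Iio_and_Ioi 0, integrableOn_Iio_iff_comp_neg, neg_zero,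
    integrableOn_congr_fun hneg measurableSet_Ioi, integrableOn_congr_fun hpos measurableSet_Ioi,
    integrableOn_sqrt_temperedStableDensity_sub_sq_iff ha1m ha2m hb1m.1 hb2m.1
      (hb1m.2.trans one_lt_two) hl1m hl2m,
    integrableOn_sqrt_temperedStableDensity_sub_sq_iff ha1p ha2p hb1p.1 hb2p.1
      (hb1p.2.trans one_lt_two) hl1p hl2p]
  tauto
end

section
/- Let β⁺,β⁻ ∈ [0,1), λ⁺,λ⁻ > 0, and suppose sequences α_n⁺, α_n⁻, λ_n⁺, λ_n⁻ → ∞ satisfy Γ(1−β⁺)α_n⁺/(λ_n⁺)^{1−β⁺} → μ⁺ and Γ(1−β⁻)α_n⁻/(λ_n⁻)^{1−β⁻} → μ⁻ for some μ⁺, μ⁻ ≥ 0. Then for every u ∈ ℝ, the characteristic function φ_n(u) of TS(α_n⁺,β⁺,λ_n⁺;α_n⁻,β⁻,λ_n⁻) converges to e^{iuμ} with μ = μ⁺ − μ⁻; i.e., the distributions converge weakly to the Dirac measure δ_μ. -/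
/-- Characteristic function of a one-sided tempered stable distribution `TS(α,β,λ)`. -/
noncomputable def oneSidedTSCharFun (α β lam : ℝ) (z : ℝ) : ℂ :=
  if β = 0 then ((lam : ℂ) / ((lam : ℂ) - Complex.I * z)) ^ (α : ℂ)
  else Complex.exp ((α : ℂ) * Complex.Gamma (-(β : ℂ)) *
    (((lam : ℂ) - Complex.I * z) ^ (β : ℂ) - (lam : ℂ) ^ (β : ℂ)))

/-- Characteristic function of `TS(α⁺,β⁺,λ⁺;α⁻,β⁻,λ⁻)`. -/
noncomputable def tsCharFun (ap bp lp am bm lm : ℝ) (z : ℝ) : ℂ :=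
  oneSidedTSCharFun ap bp lp z * oneSidedTSCharFun am bm lm (-z)

/-! With `w = 1 - iz/λ → 1`, the one-sided characteristic function is `exp E`, where
`E = -α log w` for `β = 0` and `E = Γ(-β) αλ^β (w^β - 1)` otherwise. As `αλ^β (w - 1) =
-iz α/λ^{1-β}` stays bounded, the first-order expansion of `log` resp. `w ↦ w^β` at `1`,
together with `Γ(1-β) = -βΓ(-β)`, gives `E = iz Γ(1-β)α/λ^{1-β} + o(1) → izμ`. -/

open Filter Topology Asymptotics Complex

theorem HasDerivAt.tendsto_mul_sub_sub_mul {𝕜 : Type*} [NontriviallyNormedField 𝕜]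
    {f : 𝕜 → 𝕜} {f' x : 𝕜} (hf : HasDerivAt f f' x) {ι : Type*} {l : Filter ι} {w c : ι → 𝕜}
    (hw : Tendsto w l (𝓝 x)) (hc : (fun i => c i * (w i - x)) =O[l] fun _ => (1 : 𝕜)) :
    Tendsto (fun i => c i * (f (w i) - f x) - f' * (c i * (w i - x))) l (𝓝 0) := by
  have h := ((isBigO_refl c l).mul_isLittleO (hf.isLittleO.comp_tendsto hw)).trans_isBigO hc
  rw [isLittleO_one_iff] at h
  refine h.congr fun i => ?_
  simp only [Function.comp_apply, smul_eq_mul]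
  ring

theorem Complex.ofReal_mul_cpow {r : ℝ} (hr : 0 < r) {w : ℂ} (hw : w ≠ 0) (s : ℂ) :
    ((r : ℂ) * w) ^ s = (r : ℂ) ^ s * w ^ s := by
  have hr' : (r : ℂ) ≠ 0 := ofReal_ne_zero.mpr hr.ne'
  rw [cpow_def_of_ne_zero (mul_ne_zero hr' hw), cpow_def_of_ne_zero hr', cpow_def_of_ne_zero hw,
    log_ofReal_mul hr hw, add_mul, exp_add, ofReal_log hr.le]

theorem one_sub_I_mul_div_mem_slitPlane (z L : ℝ) : (1 - I * z / L : ℂ) ∈ slitPlane := by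
  rw [mem_slitPlane_iff]
  left
  simp [div_re]

theorem tendsto_one_sub_I_mul_div {ι : Type*} {l : Filter ι} {lam : ι → ℝ}
    (hlam : Tendsto lam l atTop) (z : ℝ) :
    Tendsto (fun i => (1 - I * z / lam i : ℂ)) l (𝓝 1) := by
  have := ((continuous_ofReal.tendsto 0).comp hlam.inv_tendsto_atTop).const_mul (I * z)
  simpa [div_eq_mul_inv] using (tendsto_const_nhds (x := (1 : ℂ))).sub this

theorem ofReal_cpow_mul_one_sub_I_mul_div_sub_one (β z : ℝ) {lam : ℝ} (hlam : 0 < lam) :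
    (lam : ℂ) ^ (β : ℂ) * ((1 - I * z / lam) - 1) = -(I * z) / (lam ^ (1 - β) : ℝ) := by
  have hpow : ((lam ^ (1 - β) : ℝ) : ℂ) * (lam : ℂ) ^ (β : ℂ) = lam := by
    rw [← ofReal_cpow hlam.le, ← ofReal_mul, ← Real.rpow_add hlam, sub_add_cancel, Real.rpow_one]
  have hlam' : (lam : ℂ) ≠ 0 := ofReal_ne_zero.mpr hlam.ne'
  have hpow' : ((lam ^ (1 - β) : ℝ) : ℂ) ≠ 0 :=
    ofReal_ne_zero.mpr (Real.rpow_pos_of_pos hlam _).ne'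
  field_simp
  linear_combination (-(I * z)) * hpow

theorem oneSidedTSCharFun_zero_eq_exp (α : ℝ) {lam : ℝ} (hlam : 0 < lam) (z : ℝ) :
    oneSidedTSCharFun α 0 lam z = exp (-(α * log (1 - I * z / lam))) := by
  have hlam' : (lam : ℂ) ≠ 0 := ofReal_ne_zero.mpr hlam.ne'
  have hw := one_sub_I_mul_div_mem_slitPlane z lam
  have hbase : (lam : ℂ) / (lam - I * z) = (1 - I * z / lam)⁻¹ := by
    field_simp
  rw [oneSidedTSCharFun, if_pos rfl, hbase,
    cpow_def_of_ne_zero (inv_ne_zero (slitPlane_ne_zero hw)), log_inv _ (slitPlane_arg_ne_pi hw)]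
  congr 1
  ring

theorem oneSidedTSCharFun_eq_exp (α : ℝ) {β : ℝ} (hβ : β ≠ 0) {lam : ℝ} (hlam : 0 < lam) (z : ℝ) :
    oneSidedTSCharFun α β lam z =
      exp (Gamma (-β) * (α * (lam : ℂ) ^ (β : ℂ) * ((1 - I * z / lam) ^ (β : ℂ) - 1))) := by
  have hlam' : (lam : ℂ) ≠ 0 := ofReal_ne_zero.mpr hlam.ne'
  have hsplit : (lam : ℂ) - I * z = lam * (1 - I * z / lam) := by
    field_simp
  rw [oneSidedTSCharFun, if_neg hβ, hsplit,
    ofReal_mul_cpow hlam (slitPlane_ne_zero (one_sub_I_mul_div_mem_slitPlane z lam))]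
  congr 1
  ring

theorem Complex.ofReal_Gamma_one_sub {β : ℝ} (hβ : β ≠ 0) :
    ((Real.Gamma (1 - β) : ℝ) : ℂ) = -β * Gamma (-β) := by
  rw [← Gamma_ofReal, ← Gamma_add_one _ (neg_ne_zero.mpr (ofReal_ne_zero.mpr hβ))]
  push_cast
  congr 1
  ring

section OneSided

variable {ι : Type*} {l : Filter ι} {α lam : ι → ℝ}

theorem tendsto_oneSidedTSCharFun_zero (hlam_pos : ∀ i, 0 < lam i) (hlam : Tendsto lam l atTop)
    {μ : ℝ} (hμ : Tendsto (fun i => α i / lam i) l (𝓝 μ)) (z : ℝ) :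
    Tendsto (fun i => oneSidedTSCharFun (α i) 0 (lam i) z) l (𝓝 (exp (I * z * μ))) := by
  have hlin : ∀ i, (α i : ℂ) * ((1 - I * z / lam i) - 1) = -(I * z * (α i / lam i : ℝ)) :=
      fun i => by
    push_cast
    ring
  have hm : Tendsto (fun i => I * z * ((α i / lam i : ℝ) : ℂ)) l (𝓝 (I * z * μ)) :=
    ((continuous_ofReal.tendsto μ).comp hμ).const_mul _
  have hrem := (hasDerivAt_log (z := 1) (by simp)).tendsto_mul_sub_sub_mul
    (tendsto_one_sub_I_mul_div hlam z) (c := fun i => (α i : ℂ))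
    ((hm.neg.isBigO_one ℂ).congr_left fun i => (hlin i).symm)
  have hE : Tendsto (fun i => -(α i * log (1 - I * z / lam i))) l (𝓝 (I * z * μ)) := by
    rw [← zero_add (I * z * μ), ← neg_zero]
    refine (hrem.neg.add hm).congr fun i => ?_
    rw [hlin, log_one]
    ring
  simpa only [oneSidedTSCharFun_zero_eq_exp _ (hlam_pos _)] using hE.cexp

theorem tendsto_oneSidedTSCharFun_of_pos {β : ℝ} (hβ₀ : 0 < β) (hβ₁ : β < 1)
    (hlam_pos : ∀ i, 0 < lam i) (hlam : Tendsto lam l atTop) {μ : ℝ}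
    (hμ : Tendsto (fun i => Real.Gamma (1 - β) * α i / lam i ^ (1 - β)) l (𝓝 μ)) (z : ℝ) :
    Tendsto (fun i => oneSidedTSCharFun (α i) β (lam i) z) l (𝓝 (exp (I * z * μ))) := by
  set m := fun i => Real.Gamma (1 - β) * α i / lam i ^ (1 - β)
  have hΓ : ((Real.Gamma (1 - β) : ℝ) : ℂ) ≠ 0 :=
    ofReal_ne_zero.mpr (Real.Gamma_pos_of_pos (by linarith)).ne'
  have hlin : ∀ i, α i * (lam i : ℂ) ^ (β : ℂ) * ((1 - I * z / lam i) - 1) =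
      -(I * z * m i) / Real.Gamma (1 - β) := fun i => by
    rw [mul_assoc, ofReal_cpow_mul_one_sub_I_mul_div_sub_one β z (hlam_pos i)]
    simp only [m, ofReal_div, ofReal_mul]
    field_simp
  have hβ : (β : ℂ) ≠ 0 := ofReal_ne_zero.mpr hβ₀.ne'
  have hΓneg : Gamma (-β) ≠ 0 := right_ne_zero_of_mul (ofReal_Gamma_one_sub hβ₀.ne' ▸ hΓ)
  have hm : Tendsto (fun i => I * z * (m i : ℂ)) l (𝓝 (I * z * μ)) :=
    ((continuous_ofReal.tendsto μ).comp hμ).const_mul _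
  have hder : HasDerivAt (fun t : ℂ => t ^ (β : ℂ)) β 1 := by
    simpa using (hasDerivAt_id (1 : ℂ)).cpow_const (c := (β : ℂ)) (by simp)
  have hrem := (hder.tendsto_mul_sub_sub_mul (tendsto_one_sub_I_mul_div hlam z)
    (c := fun i => α i * (lam i : ℂ) ^ (β : ℂ))
    (((hm.neg.div_const _).isBigO_one ℂ).congr_left fun i => (hlin i).symm)).const_mul (Gamma (-β))
  have hE : Tendsto (fun i => Gamma (-β) *
      (α i * (lam i : ℂ) ^ (β : ℂ) * ((1 - I * z / lam i) ^ (β : ℂ) - 1))) l (𝓝 (I * z * μ)) := by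
    rw [← zero_add (I * z * μ), ← mul_zero (Gamma (-β))]
    refine (hrem.add hm).congr fun i => ?_
    rw [hlin, one_cpow, ofReal_Gamma_one_sub hβ₀.ne']
    field_simp
    ring
  simpa only [oneSidedTSCharFun_eq_exp _ hβ₀.ne' (hlam_pos _)] using hE.cexp

theorem tendsto_oneSidedTSCharFun {β : ℝ} (hβ : β ∈ Set.Ico (0 : ℝ) 1)
    (hlam_pos : ∀ i, 0 < lam i) (hlam : Tendsto lam l atTop) {μ : ℝ}
    (hμ : Tendsto (fun i => Real.Gamma (1 - β) * α i / lam i ^ (1 - β)) l (𝓝 μ)) (z : ℝ) :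
    Tendsto (fun i => oneSidedTSCharFun (α i) β (lam i) z) l (𝓝 (exp (I * z * μ))) := by
  rcases hβ.1.eq_or_lt with rfl | hβ₀
  · simp only [sub_zero, Real.Gamma_one, Real.rpow_one, one_mul] at hμ
    exact tendsto_oneSidedTSCharFun_zero hlam_pos hlam hμ z
  · exact tendsto_oneSidedTSCharFun_of_pos hβ₀ hβ.2 hlam_pos hlam hμ z

end OneSided

theorem temperedStable_tendsto_dirac_general
    (bp bm : ℝ) (hbp : bp ∈ Set.Ico (0:ℝ) 1) (hbm : bm ∈ Set.Ico (0:ℝ) 1)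
    (ap am lp lm : ℕ → ℝ)
    (hpos : ∀ n, 0 < ap n ∧ 0 < am n ∧ 0 < lp n ∧ 0 < lm n)
    (hlp : Filter.Tendsto lp Filter.atTop Filter.atTop)
    (hlm : Filter.Tendsto lm Filter.atTop Filter.atTop)
    (μp μm : ℝ)
    (hmp : Filter.Tendsto (fun n => Real.Gamma (1 - bp) * ap n / lp n ^ (1 - bp))
      Filter.atTop (nhds μp))
    (hmm : Filter.Tendsto (fun n => Real.Gamma (1 - bm) * am n / lm n ^ (1 - bm))
      Filter.atTop (nhds μm)) :
    ∀ u : ℝ, Filter.Tendsto (fun n => tsCharFun (ap n) bp (lp n) (am n) bm (lm n) u)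
      Filter.atTop (nhds (Complex.exp (Complex.I * u * ((μp - μm : ℝ) : ℂ)))) := by
  intro u
  have hplus := tendsto_oneSidedTSCharFun hbp (fun n => (hpos n).2.2.1) hlp hmp u
  have hminus := tendsto_oneSidedTSCharFun hbm (fun n => (hpos n).2.2.2) hlm hmm (-u)
  simp only [tsCharFun]
  convert hplus.mul hminus using 2
  rw [← exp_add]
  push_cast
  congr 1
  ring

/-- If `α_n⁺, α_n⁻, λ_n⁺, λ_n⁻ → ∞` with
`Γ(1−β⁺)α_n⁺/(λ_n⁺)^{1−β⁺} → μ⁺` and `Γ(1−β⁻)α_n⁻/(λ_n⁻)^{1−β⁻} → μ⁻` (`μ⁺,μ⁻ ≥ 0`),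
then the characteristic functions of `TS(α_n⁺,β⁺,λ_n⁺;α_n⁻,β⁻,λ_n⁻)` converge pointwise
to `u ↦ e^{iuμ}` with `μ = μ⁺ − μ⁻`, i.e. the laws converge weakly to `δ_μ`. -/
theorem temperedStable_tendsto_dirac
    (bp bm : ℝ) (hbp : bp ∈ Set.Ico (0:ℝ) 1) (hbm : bm ∈ Set.Ico (0:ℝ) 1)
    (ap am lp lm : ℕ → ℝ)
    (hpos : ∀ n, 0 < ap n ∧ 0 < am n ∧ 0 < lp n ∧ 0 < lm n)
    (hap : Filter.Tendsto ap Filter.atTop Filter.atTop)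
    (ham : Filter.Tendsto am Filter.atTop Filter.atTop)
    (hlp : Filter.Tendsto lp Filter.atTop Filter.atTop)
    (hlm : Filter.Tendsto lm Filter.atTop Filter.atTop)
    (μp μm : ℝ) (hμp : 0 ≤ μp) (hμm : 0 ≤ μm)
    (hmp : Filter.Tendsto (fun n => Real.Gamma (1 - bp) * ap n / lp n ^ (1 - bp))
      Filter.atTop (nhds μp))
    (hmm : Filter.Tendsto (fun n => Real.Gamma (1 - bm) * am n / lm n ^ (1 - bm))
      Filter.atTop (nhds μm)) :
    ∀ u : ℝ, Filter.Tendsto (fun n => tsCharFun (ap n) bp (lp n) (am n) bm (lm n) u)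
      Filter.atTop (nhds (Complex.exp (Complex.I * u * ((μp - μm : ℝ) : ℂ)))) :=
  temperedStable_tendsto_dirac_general bp bm hbp hbm ap am lp lm hpos hlp hlm μp μm hmp hmm
end
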